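/- The self-intersection of λ(n, μ) on S† is λ(n, μ)² = (n²(2g-2) - μ⁽²⁾)/2, where μ⁽²⁾ = Σ_{i=1}^{2g+2} μ_i². -/
import Mathlib


/-- `λ(n,μ)² = (n²(2g-2) - μ⁽²⁾)/2` with `μ⁽²⁾ = Σ μ_i²`, stated integrally as `2 λ(n,μ)² = n²(2g-2) - μ⁽²⁾`.  The hypotheses record the data of the
computation: the projection formula `φ*x.φ*y = 2 x.y` for the degree-2 cover
`φ`, the intersection numbers on the ruled surface `S`
(`C0² = 0`, `C0.(K_R f) = 2g-2`, `(K_R f)² = 0`), the behaviour of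
intersections under the two blow-ups (`bl'* bl*` preserves products of pulled
classes, exceptional classes `E_i, s_i⊥, r_i⊥` are mutually orthogonal of
square `-1` and orthogonal to pulled classes), the identity
`φ*(λ(n,μ)) = bl'*(L_{n,n,n}) - Σ μ_i r_i⊥` with
`L_{n,n,n} = bl*(nC0 + nK_R f) - n Σ E_i`, and
`φ*(K_{S†}) = bl'*(bl*(-2C0 + K_R f) + Σ E_i)`; since `φ` has degree 2,
`2 λ(n,μ)² = (φ*λ(n,μ))²`. -/
theorem stmt_14
    (g n : ℕ) (hg : 1 < g) (hn : 2 < n)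
    (PicS PicP PicD : Type) [AddCommGroup PicS] [AddCommGroup PicP] [AddCommGroup PicD]
    (interS : PicS → PicS → ℤ) (interP : PicP → PicP → ℤ) (interD : PicD → PicD → ℤ)
    (hPsymm : ∀ a b, interP a b = interP b a)
    (hPadd : ∀ a b c, interP (a + b) c = interP a c + interP b c)
    (hPsmul : ∀ (m : ℤ) a b, interP (m • a) b = m * interP a b)
    (φpull : PicD →+ PicP)
    (hproj : ∀ x y : PicD, interP (φpull x) (φpull y) = 2 * interD x y)
    (C0 KRf : PicS)
    (hC0 : interS C0 C0 = 0) (hC0K : interS C0 KRf = 2 * (g : ℤ) - 2)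
    (hKK : interS KRf KRf = 0)
    (blbl' : PicS →+ PicP)  -- the composite pullback bl'* ∘ bl*
    (ecl : Fin (2 * g - 2) → PicP) (sperp rperp : Fin (2 * g + 2) → PicP)
    (hcomp : ∀ D1 D2 : PicS, interP (blbl' D1) (blbl' D2) = interS D1 D2)
    (hDe : ∀ (D : PicS) i, interP (blbl' D) (ecl i) = 0)
    (hDs : ∀ (D : PicS) i, interP (blbl' D) (sperp i) = 0)
    (hDr : ∀ (D : PicS) i, interP (blbl' D) (rperp i) = 0)
    (hee : ∀ i j, interP (ecl i) (ecl j) = if i = j then -1 else 0)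
    (hss : ∀ i j, interP (sperp i) (sperp j) = if i = j then -1 else 0)
    (hrr : ∀ i j, interP (rperp i) (rperp j) = if i = j then -1 else 0)
    (hes : ∀ i j, interP (ecl i) (sperp j) = 0)
    (her : ∀ i j, interP (ecl i) (rperp j) = 0)
    (hsr : ∀ i j, interP (sperp i) (rperp j) = 0)
    (μ : Fin (2 * g + 2) → ℕ) (hμ : ∀ i, μ i % 2 = n % 2)
    (lam KD : PicD)
    (hlam : φpull lam
      = blbl' ((n : ℤ) • C0 + (n : ℤ) • KRf) - (n : ℤ) • (∑ i, ecl i)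
          - ∑ i, (μ i : ℤ) • rperp i)
    (hKD : φpull KD = blbl' (-((2 : ℤ) • C0) + KRf) + ∑ i, ecl i) :
    2 * interD lam lam = (n : ℤ) ^ 2 * (2 * (g : ℤ) - 2) - ∑ i, (μ i : ℤ) ^ 2 := by
  have hPsmul₂ : ∀ (m : ℤ) (a b : PicP), interP a (m • b) = m * interP a b := fun m a b => by
    rw [hPsymm, hPsmul, hPsymm]
  have hPadd₂ : ∀ a b c : PicP, interP a (b + c) = interP a b + interP a c := fun a b c => by
    rw [hPsymm, hPadd, hPsymm b a, hPsymm c a]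
  have hPneg : ∀ a b : PicP, interP (-a) b = - interP a b := fun a b => by
    have := hPsmul (-1) a b; simpa using this
  have hPsub : ∀ a b c : PicP, interP (a - b) c = interP a c - interP b c := fun a b c => by
    rw [sub_eq_add_neg, hPadd, hPneg, sub_eq_add_neg]
  have hPsub₂ : ∀ a b c : PicP, interP a (b - c) = interP a b - interP a c := fun a b c => by
    rw [hPsymm, hPsub, hPsymm b a, hPsymm c a]
  have hPsum : ∀ {ι : Type} (s : Finset ι) (f : ι → PicP) (b : PicP),
      interP (∑ i ∈ s, f i) b = ∑ i ∈ s, interP (f i) b := by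
    intro ι s f b
    exact map_sum (AddMonoidHom.mk' (fun a => interP a b) (fun x y => hPadd x y b)) f s
  have hPsum₂ : ∀ {ι : Type} (s : Finset ι) (f : ι → PicP) (b : PicP),
      interP b (∑ i ∈ s, f i) = ∑ i ∈ s, interP b (f i) := by
    intro ι s f b
    rw [hPsymm, hPsum]; exact Finset.sum_congr rfl fun i _ => hPsymm _ _
  have heD : ∀ (D : PicS) i, interP (ecl i) (blbl' D) = 0 := fun D i =>
    (hPsymm _ _).trans (hDe D i)
  have hrD : ∀ (D : PicS) i, interP (rperp i) (blbl' D) = 0 := fun D i =>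
    (hPsymm _ _).trans (hDr D i)
  have hre : ∀ i j, interP (rperp i) (ecl j) = 0 := fun i j =>
    (hPsymm _ _).trans (her j i)
  rw [← hproj lam lam, hlam, map_add, map_zsmul, map_zsmul]
  simp only [hPsub, hPsub₂, hPadd, hPadd₂, hPsmul, hPsmul₂, hPsum, hPsum₂,
    hcomp, hDe, heD, hDr, hrD, hee, hrr, her, hre, hC0, hC0K, hKK,
    hPsymm (blbl' KRf) (blbl' C0), mul_zero, add_zero, zero_add, mul_ite,
    Finset.sum_ite_eq, Finset.mem_univ, if_true, sub_zero, zero_sub,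
    Finset.sum_const, Finset.card_univ, Fintype.card_fin, smul_eq_mul,
    mul_neg, mul_one, Finset.sum_neg_distrib]
  have hcard : ((2 * g - 2 : ℕ) : ℤ) = 2 * (g : ℤ) - 2 := by omega
  push_cast [hcard]
  ring_nf
  have hKC : interS KRf C0 = 2 * (g : ℤ) - 2 := by
    rw [← hcomp, hPsymm, hcomp]; exact hC0K
  have hcard2 : ((g * 2 - 2 : ℕ) : ℤ) = 2 * (g : ℤ) - 2 := by omega
  have hsq : ∀ x, ((μ x : ℤ)) * (μ x : ℤ) = (μ x : ℤ) ^ 2 := fun x => (sq _).symm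
  simp only [hKC, hcard2, hsq, Finset.sum_const_zero, mul_zero]
  ring
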